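/- arXiv:1406.2955 — 2 statements merged into one kernel-verified Lean document; each statement's English description precedes it below -/
import Mathlib

section
/- Let P_n and Q_n be the standard convergent numerator and denominator sequences of the continued fraction [a_1, …, a_m], i.e. P_0 = 1, P_1 = a_1, P_{n+1} = a_{n+1}·P_n + P_{n−1} and Q_0 = 0, Q_1 = 1, Q_{n+1} = a_{n+1}·Q_n + Q_{n−1} for 1 ≤ n ≤ m−1. Then p_n = P_n and q_n = Q_n for all 0 ≤ n ≤ m; in particular p_m/q_m is the value of the continued fraction [a_1, …, a_m]. -/
/-- The transposition (1 3) on strings {1,2,3}, encoded as `Fin 3 = {0,1,2}`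
(string `r` corresponds to `r - 1 : Fin 3`). -/
def trans13 : Equiv.Perm (Fin 3) := Equiv.swap 0 2

/-- The 3-cycle (1 3 2) sending 1 ↦ 3, 3 ↦ 2, 2 ↦ 1, encoded on `Fin 3`:
0 ↦ 2, 2 ↦ 1, 1 ↦ 0. -/
def cyc132 : Equiv.Perm (Fin 3) := Equiv.swap 0 1 * Equiv.swap 0 2

/-- The matrix `M(a, i, j)`: the only (possibly) nonzero entries are ⌊a/2⌋ at (i,i),
⌈(a-1)/2⌉ at (i,j), ⌈a/2⌉ at (j,i) and ⌊(a-1)/2⌋ at (j,j). -/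
def Mmat (a : ℕ) (i j : Fin 3) : Matrix (Fin 3) (Fin 3) ℤ :=
  Matrix.of fun r t =>
    if r = i ∧ t = i then ⌊(a : ℚ) / 2⌋
    else if r = i ∧ t = j then ⌈((a : ℚ) - 1) / 2⌉
    else if r = j ∧ t = i then ⌈(a : ℚ) / 2⌉
    else if r = j ∧ t = j then ⌊((a : ℚ) - 1) / 2⌋
    else 0

/-- Kronecker delta δ_{rt}. -/
def kd (r t : Fin 3) : ℕ := if r = t then 1 else 0

/-- `mu c = 1` if `c` is odd, `0` if `c` is even. -/
def mu (c : ℕ) : ℕ := if Odd c then 1 else 0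

/-- The value of the continued fraction `[x₁, …, xₖ]` as a rational number. -/
def cfVal : List ℕ → ℚ
  | [] => 0
  | [x] => (x : ℚ)
  | x :: xs => (x : ℚ) + 1 / cfVal xs

/-!
Put `E n = 2 * D n + 1`, so that `E (n + 1) = (2 * M (n + 1) + 1) * E n` and `E 0 = 1`. Listing the
rows of `E n` in the order `σ (n + 1) 0, σ (n + 1) 1, σ (n + 1) 2`, the permutations are chosen
exactly so that this recursion becomes left multiplication by one matrix
`T a = !![0, 0, 1; a, a - 1, 0; a + 1, a, 0]`, whatever the parity of `a`. With `w = (1, 1, -1)`,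
`u n = (P n, P n - Q n, Q n)` and `ε = (-1) ^ n`, the reordered rows are
`u (n - 1) + ε w`, `u n - u (n - 1) - ε w`, `u n - ε w`, and `T` maps this shape to itself with
`n` advanced by one. So the column sums of `E n` are `2 P n - ε` and `2 Q n + ε`, which unwinds to
`p n = P n` and `q n = Q n`. The value of the continued fraction follows from the classical identity
`[a₁, …, aₘ] = (P n t + P (n - 1)) / (Q n t + Q (n - 1))`, `t = [aₙ₊₁, …, aₘ]`.
-/

def stepPerm (a : ℕ) : Equiv.Perm (Fin 3) := if Even a then trans13 else cyc132

def transferMatrix (a : ℕ) : Matrix (Fin 3) (Fin 3) ℤ :=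
  !![0, 0, 1; a, a - 1, 0; a + 1, a, 0]

lemma Mmat_eq (a : ℕ) (i j : Fin 3) :
    Mmat a i j = Matrix.of fun r t =>
      if r = i ∧ t = i then (a : ℤ) / 2
      else if r = i ∧ t = j then -((1 - a) / 2)
      else if r = j ∧ t = i then -((-a) / 2)
      else if r = j ∧ t = j then ((a : ℤ) - 1) / 2
      else 0 := by
  have h (c : ℤ) : (c : ℚ) / 2 = (c : ℚ) / ((2 : ℕ) : ℚ) := by norm_num
  ext r t
  simp only [Mmat, Matrix.of_apply]
  rw [← Int.cast_natCast, h, Rat.floor_intCast_div_natCast, Rat.ceil_intCast_div_natCast,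
    ← Int.cast_one, ← Int.cast_sub, h, Rat.ceil_intCast_div_natCast, Rat.floor_intCast_div_natCast]
  simp

lemma submatrix_stepPerm (a : ℕ) :
    (2 * Mmat a 0 1 + 1).submatrix (stepPerm a) id = transferMatrix a := by
  rw [Mmat_eq]
  ext r t
  rcases Nat.even_or_odd a with ⟨k, rfl⟩ | ⟨k, rfl⟩
  · rw [stepPerm, if_pos ⟨k, rfl⟩]
    fin_cases r <;> fin_cases t <;>
      simp [trans13, transferMatrix, two_mul, Equiv.swap_apply_def] <;> omega
  · rw [stepPerm, if_neg (by simp [parity_simps])]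
    fin_cases r <;> fin_cases t <;>
      simp [cyc132, transferMatrix, two_mul, Equiv.swap_apply_def] <;> omega

lemma submatrix_mul_stepPerm (a : ℕ) (σ : Equiv.Perm (Fin 3)) (E : Matrix (Fin 3) (Fin 3) ℤ) :
    ((2 * Mmat a (σ 0) (σ 1) + 1) * E).submatrix (σ * stepPerm a : Equiv.Perm (Fin 3)) id
      = transferMatrix a * E.submatrix σ id := by
  have hN : (2 * Mmat a (σ 0) (σ 1) + 1).submatrix σ σ = 2 * Mmat a 0 1 + 1 := by
    ext r t
    simp [Mmat, two_mul, Matrix.one_apply, σ.injective.eq_iff]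
  rw [Matrix.submatrix_mul _ _ _ σ _ σ.bijective, ← submatrix_stepPerm, ← hN, Equiv.Perm.coe_mul,
    Matrix.submatrix_submatrix, Function.comp_id]

def convergentRows (P' Q' P Q ε : ℤ) : Matrix (Fin 3) (Fin 3) ℤ :=
  !![P' + ε, P' - Q' + ε, Q' - ε;
    P - P' - ε, P - P' - (Q - Q') - ε, Q - Q' + ε;
    P - ε, P - Q - ε, Q + ε]

lemma transferMatrix_eq_convergentRows (a : ℕ) :
    transferMatrix a = convergentRows 1 0 a 1 (-1) := by
  ext r t
  fin_cases r <;> fin_cases t <;> simp [transferMatrix, convergentRows]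

lemma transferMatrix_mul_convergentRows (a : ℕ) (P' Q' P Q ε : ℤ) :
    transferMatrix a * convergentRows P' Q' P Q ε
      = convergentRows P Q (a * P + P') (a * Q + Q') (-ε) := by
  ext r t
  fin_cases r <;> fin_cases t <;>
    simp [transferMatrix, convergentRows, Matrix.mul_apply, Fin.sum_univ_three] <;> ring

lemma sum_convergentRows_zero (P' Q' P Q ε : ℤ) :
    ∑ r, convergentRows P' Q' P Q ε r 0 = 2 * P - ε := by
  simp [convergentRows, Fin.sum_univ_three]; ring

lemma sum_convergentRows_two (P' Q' P Q ε : ℤ) :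
    ∑ r, convergentRows P' Q' P Q ε r 2 = 2 * Q + ε := by
  simp [convergentRows, Fin.sum_univ_three]; ring

lemma eq_convergentRows_of_transfer {m : ℕ} {a : ℕ → ℕ} {R : ℕ → Matrix (Fin 3) (Fin 3) ℤ}
    {P Q : ℕ → ℤ} (hR0 : R 0 = 1)
    (hR : ∀ n, n + 1 ≤ m → R (n + 1) = transferMatrix (a (n + 1)) * R n)
    (hP0 : P 0 = 1) (hP1 : P 1 = a 1)
    (hP : ∀ n, 1 ≤ n → n + 1 ≤ m → P (n + 1) = a (n + 1) * P n + P (n - 1))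
    (hQ0 : Q 0 = 0) (hQ1 : Q 1 = 1)
    (hQ : ∀ n, 1 ≤ n → n + 1 ≤ m → Q (n + 1) = a (n + 1) * Q n + Q (n - 1))
    {n : ℕ} (hn : 1 ≤ n) (hnm : n ≤ m) :
    R n = convergentRows (P (n - 1)) (Q (n - 1)) (P n) (Q n) ((-1) ^ n) := by
  induction n, hn using Nat.le_induction with
  | base => rw [hR 0 hnm, hR0, mul_one, transferMatrix_eq_convergentRows, hP0, hQ0, hP1, hQ1]; rfl
  | succ n hn ih =>
    rw [hR n hnm, ih (by omega), transferMatrix_mul_convergentRows, hP n hn hnm, hQ n hn hnm,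
      pow_succ, mul_neg_one, Nat.add_sub_cancel]

lemma sum_submatrix_two_mul_add_one (σ : Equiv.Perm (Fin 3)) (D : Matrix (Fin 3) (Fin 3) ℤ)
    (t : Fin 3) : ∑ r, (2 * D + 1).submatrix σ id r t = 2 * ∑ r, D r t + 1 := by
  refine (Equiv.sum_comp σ fun r => (2 * D + 1 : Matrix (Fin 3) (Fin 3) ℤ) r t).trans ?_
  simp [two_mul, Matrix.one_apply, Finset.sum_add_distrib]

lemma neg_one_pow_eq_one_sub_two_mul_mu (n : ℕ) : (-1 : ℤ) ^ n = 1 - 2 * (mu n : ℤ) := by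
  rcases Nat.even_or_odd n with h | h
  · simp [h.neg_one_pow, mu, Nat.not_odd_iff_even.mpr h]
  · simp [h.neg_one_pow, mu, h]

lemma colSums_of_submatrix_eq_convergentRows {D : Matrix (Fin 3) (Fin 3) ℤ}
    {σ : Equiv.Perm (Fin 3)} {P' Q' P Q : ℤ} {n : ℕ}
    (h : (2 * D + 1).submatrix σ id = convergentRows P' Q' P Q ((-1) ^ n)) :
    D 0 0 + D 1 0 + D 2 0 + 1 - mu n = P ∧ D 0 2 + D 1 2 + D 2 2 + mu n = Q := by
  have h0 := sum_submatrix_two_mul_add_one σ D 0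
  have h2 := sum_submatrix_two_mul_add_one σ D 2
  rw [h, sum_convergentRows_zero, neg_one_pow_eq_one_sub_two_mul_mu] at h0
  rw [h, sum_convergentRows_two, neg_one_pow_eq_one_sub_two_mul_mu] at h2
  rw [Fin.sum_univ_three] at h0 h2
  omega

def cfTail (a : ℕ → ℕ) (m n : ℕ) : ℚ := cfVal ((List.range' n (m + 1 - n)).map a)

-- At `n = m` the tail `cfTail a m (m + 1)` is `cfVal [] = 0`, and `0⁻¹ = 0` in Lean.
lemma cfTail_eq_add_inv {a : ℕ → ℕ} {m n : ℕ} (hn : n ≤ m) :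
    cfTail a m n = a n + (cfTail a m (n + 1))⁻¹ := by
  obtain ⟨k, rfl⟩ : ∃ k, m = n + k := ⟨m - n, by omega⟩
  rcases k with _ | k
  · simp [cfTail, cfVal]
  · rw [cfTail, cfTail, show n + (k + 1) + 1 - n = k + 2 by omega,
      show n + (k + 1) + 1 - (n + 1) = k + 1 by omega]
    simp [List.range'_succ, cfVal]

lemma cfVal_pos {l : List ℕ} (hl : l ≠ []) (h : ∀ x ∈ l, 0 < x) : 0 < cfVal l := by
  induction l using cfVal.induct with
  | case1 => exact absurd rfl hl
  | case2 x => simpa [cfVal] using h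
  | case3 x xs hxs ih =>
    have hx : (0 : ℚ) < x := by exact_mod_cast h x List.mem_cons_self
    have hxs : 0 < cfVal xs := ih hxs fun y hy => h y (List.mem_cons_of_mem x hy)
    rw [cfVal.eq_3 x xs ‹_›]
    positivity

lemma cfTail_pos {a : ℕ → ℕ} {m n : ℕ} (ha : ∀ k, n ≤ k → k ≤ m → 0 < a k) (hn : n ≤ m) :
    0 < cfTail a m n := by
  refine cfVal_pos (by simp; omega) ?_
  simp only [List.mem_map, List.mem_range'_1]
  rintro _ ⟨k, hk, rfl⟩
  exact ha k (by omega) (by omega)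

lemma convergent_denom_pos {m : ℕ} {a : ℕ → ℕ} {Q : ℕ → ℤ} (ha : ∀ n, 1 ≤ n → n ≤ m → 0 < a n)
    (hQ0 : Q 0 = 0) (hQ1 : Q 1 = 1)
    (hQ : ∀ n, 1 ≤ n → n + 1 ≤ m → Q (n + 1) = a (n + 1) * Q n + Q (n - 1))
    {n : ℕ} (hn : 1 ≤ n) (hnm : n ≤ m) : 0 ≤ Q (n - 1) ∧ 0 < Q n := by
  induction n, hn using Nat.le_induction with
  | base => simp [hQ0, hQ1]
  | succ n hn ih =>
    obtain ⟨h0, h1⟩ := ih (by omega)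
    have han : (1 : ℤ) ≤ a (n + 1) := by exact_mod_cast ha (n + 1) (by omega) hnm
    rw [hQ n hn hnm, Nat.add_sub_cancel]
    constructor <;> nlinarith

lemma cfTail_one_mul_eq {m : ℕ} {a : ℕ → ℕ} {P Q : ℕ → ℤ} (ha : ∀ n, 1 ≤ n → n ≤ m → 0 < a n)
    (hP0 : P 0 = 1) (hP1 : P 1 = a 1)
    (hP : ∀ n, 1 ≤ n → n + 1 ≤ m → P (n + 1) = a (n + 1) * P n + P (n - 1))
    (hQ0 : Q 0 = 0) (hQ1 : Q 1 = 1)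
    (hQ : ∀ n, 1 ≤ n → n + 1 ≤ m → Q (n + 1) = a (n + 1) * Q n + Q (n - 1))
    {n : ℕ} (hn : 1 ≤ n) (hnm : n ≤ m) :
    cfTail a m 1 * (Q n + Q (n - 1) * (cfTail a m (n + 1))⁻¹)
      = P n + P (n - 1) * (cfTail a m (n + 1))⁻¹ := by
  induction n, hn using Nat.le_induction with
  | base => rw [cfTail_eq_add_inv hnm, hP0, hQ0, hP1, hQ1]; push_cast; ring
  | succ n hn ih =>
    set y := cfTail a m (n + 1)
    have hy : y ≠ 0 := (cfTail_pos (fun k hk hkm => ha k (by omega) hkm) hnm).ne'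
    have hy_eq : y = a (n + 1) + (cfTail a m (n + 1 + 1))⁻¹ := cfTail_eq_add_inv hnm
    have ih := ih (by omega)
    rw [hP n hn hnm, hQ n hn hnm, Nat.add_sub_cancel]
    push_cast
    field_simp at ih
    linear_combination ih - (cfTail a m 1 * Q n - P n) * hy_eq

lemma convergent_div_eq_cfVal {m : ℕ} {a : ℕ → ℕ} {P Q : ℕ → ℤ} (hm : 1 ≤ m)
    (ha : ∀ n, 1 ≤ n → n ≤ m → 0 < a n)
    (hP0 : P 0 = 1) (hP1 : P 1 = a 1)
    (hP : ∀ n, 1 ≤ n → n + 1 ≤ m → P (n + 1) = a (n + 1) * P n + P (n - 1))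
    (hQ0 : Q 0 = 0) (hQ1 : Q 1 = 1)
    (hQ : ∀ n, 1 ≤ n → n + 1 ≤ m → Q (n + 1) = a (n + 1) * Q n + Q (n - 1)) :
    (P m : ℚ) / Q m = cfVal ((List.range' 1 m).map a) := by
  have hQm : (Q m : ℚ) ≠ 0 := by exact_mod_cast (convergent_denom_pos ha hQ0 hQ1 hQ hm le_rfl).2.ne'
  have h := cfTail_one_mul_eq ha hP0 hP1 hP hQ0 hQ1 hQ hm le_rfl
  have hlast : cfTail a m (m + 1) = 0 := by simp [cfTail, cfVal]
  simp only [hlast, inv_zero, mul_zero, add_zero] at h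
  rw [div_eq_iff hQm, ← h, cfTail, Nat.add_sub_cancel]

theorem pq_are_convergents
    (m : ℕ) (hm : 1 ≤ m) (a : ℕ → ℕ)
    (ha : ∀ n, 1 ≤ n → n ≤ m → 0 < a n)
    (σ : ℕ → Equiv.Perm (Fin 3))
    (hσ1 : σ 1 = 1)
    (hσ : ∀ n, 1 ≤ n → n ≤ m →
      σ (n + 1) = if Even (a n) then σ n * trans13 else σ n * cyc132)
    (D : ℕ → Matrix (Fin 3) (Fin 3) ℤ)
    (hD0 : D 0 = 0)
    (hD : ∀ n, n + 1 ≤ m →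
      D (n + 1) = 2 * Mmat (a (n + 1)) (σ (n + 1) 0) (σ (n + 1) 1) * D n + D n
        + Mmat (a (n + 1)) (σ (n + 1) 0) (σ (n + 1) 1))
    (s : ℕ → Fin 3 → ℤ)
    (hs : ∀ n t, s n t = D n 0 t + D n 1 t + D n 2 t)
    (p q : ℕ → ℤ)
    (hp : ∀ n, p n = s n 0 + 1 - (mu n : ℤ))
    (hq : ∀ n, q n = s n 2 + (mu n : ℤ))
    (P Q : ℕ → ℤ)
    (hP0 : P 0 = 1) (hP1 : P 1 = (a 1 : ℤ))
    (hP : ∀ n, 1 ≤ n → n + 1 ≤ m →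
      P (n + 1) = (a (n + 1) : ℤ) * P n + P (n - 1))
    (hQ0 : Q 0 = 0) (hQ1 : Q 1 = 1)
    (hQ : ∀ n, 1 ≤ n → n + 1 ≤ m →
      Q (n + 1) = (a (n + 1) : ℤ) * Q n + Q (n - 1)) :
    (∀ n ≤ m, p n = P n ∧ q n = Q n) ∧
      (p m : ℚ) / (q m : ℚ) = cfVal ((List.range' 1 m).map a) := by
  set R : ℕ → Matrix (Fin 3) (Fin 3) ℤ := fun n => (2 * D n + 1).submatrix (σ (n + 1)) id
  have hR0 : R 0 = 1 := by simp [R, hD0, hσ1]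
  have hR (n : ℕ) (hn : n + 1 ≤ m) : R (n + 1) = transferMatrix (a (n + 1)) * R n := by
    have hσ' : σ (n + 2) = σ (n + 1) * stepPerm (a (n + 1)) := by
      rw [hσ (n + 1) (by omega) hn, stepPerm]; split_ifs <;> rfl
    have hE : 2 * D (n + 1) + 1
        = (2 * Mmat (a (n + 1)) (σ (n + 1) 0) (σ (n + 1) 1) + 1) * (2 * D n + 1) := by
      rw [hD n hn]; noncomm_ring
    simp only [R, hσ', hE, submatrix_mul_stepPerm]
  have hpq (n : ℕ) (hnm : n ≤ m) : p n = P n ∧ q n = Q n := by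
    rcases Nat.eq_zero_or_pos n with rfl | hn
    · simp [hp, hq, hs, hD0, hP0, hQ0, mu]
    · rw [hp, hq, hs, hs]
      exact colSums_of_submatrix_eq_convergentRows
        (eq_convergentRows_of_transfer hR0 hR hP0 hP1 hP hQ0 hQ1 hQ hn hnm)
  refine ⟨hpq, ?_⟩
  rw [(hpq m le_rfl).1, (hpq m le_rfl).2]
  exact convergent_div_eq_cfVal hm ha hP0 hP1 hP hQ0 hQ1 hQ
end

section
/- For every 0 ≤ n ≤ m−1 and every t ∈ {1,2,3}, writing i = i_{n+1}, j = j_{n+1}, k = k_{n+1}, a = a_{n+1}, and d'_{rt} = d_{rt}(n+1), one has s_{n,t} = (−1)^{μ_a}·(d'_{it} − d'_{jt}) + d'_{kt} − μ_a·δ_{it} + (μ_a − 1)·δ_{jt}. -/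
/-!
Row `k` of `M(a, i, j)` vanishes, so the step `D ↦ 2MD + D + M` fixes row `k` of `D`, and the
new rows `i`, `j` depend only on the old rows `i`, `j`. Since `⌈x/2⌉ - ⌊x/2⌋ = x mod 2`, rows `i`
and `j` of `M` differ by `(-μ_a, 1 - μ_a)` in columns `(i, j)`, which gives
`d'_i - d'_j = (1 - 2μ_a)(d_i + d_j) - μ_a δ_i + (1 - μ_a) δ_j`. Multiplying by
`(-1)^μ_a = 1 - 2μ_a` and adding `d'_k = d_k` recovers the column sum of `D`.
-/

lemma Int.ceil_sub_floor_div_two (n : ℤ) : ⌈(n : ℚ) / 2⌉ - ⌊(n : ℚ) / 2⌋ = n % 2 := by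
  have hceil : ⌈(n : ℚ) / 2⌉ = -((-n) / 2) := by exact_mod_cast Rat.ceil_intCast_div_natCast n 2
  have hfloor : ⌊(n : ℚ) / 2⌋ = n / 2 := by exact_mod_cast Rat.floor_intCast_div_natCast n 2
  omega

lemma mu_eq_emod_two (c : ℕ) : (mu c : ℤ) = c % 2 := by
  unfold mu
  split_ifs with h <;> [rw [Nat.odd_iff] at h; rw [Nat.not_odd_iff] at h] <;> omega

lemma mu_eq_zero_or_one (c : ℕ) : mu c = 0 ∨ mu c = 1 := by
  unfold mu
  split_ifs <;> simp

lemma Mmat_apply_of_ne_of_ne {a : ℕ} {i j r : Fin 3} (hri : r ≠ i) (hrj : r ≠ j) (t : Fin 3) :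
    Mmat a i j r t = 0 := by
  simp [Mmat, hri, hrj]

lemma Mmat_apply_sub {a : ℕ} {i j : Fin 3} (hij : i ≠ j) (t : Fin 3) :
    Mmat a i j i t - Mmat a i j j t = -(mu a : ℤ) * kd i t + (1 - mu a) * kd j t := by
  have hgap := Int.ceil_sub_floor_div_two a
  have hgap_pred := Int.ceil_sub_floor_div_two (a - 1)
  have hmu := mu_eq_emod_two a
  push_cast at hgap hgap_pred
  by_cases hti : t = i
  · subst hti
    simp [Mmat, kd, hij, hij.symm]
    omega
  by_cases htj : t = j
  · subst htj
    simp [Mmat, kd, hij, hij.symm]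
    omega
  · simp [Mmat, kd, hij, hij.symm, hti, htj, Ne.symm hti, Ne.symm htj]

lemma Mmat_mul_apply {a : ℕ} {i j : Fin 3} (hij : i ≠ j) (D : Matrix (Fin 3) (Fin 3) ℤ)
    (r t : Fin 3) : (Mmat a i j * D) r t = Mmat a i j r i * D i t + Mmat a i j r j * D j t := by
  rw [Matrix.mul_apply]
  exact Fintype.sum_eq_add i j hij fun l ⟨hli, hlj⟩ => by simp [Mmat, hli, hlj]

def stepD (a : ℕ) (i j : Fin 3) (D : Matrix (Fin 3) (Fin 3) ℤ) : Matrix (Fin 3) (Fin 3) ℤ :=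
  2 * Mmat a i j * D + D + Mmat a i j

section stepD

variable {a : ℕ} {i j : Fin 3}

lemma stepD_apply (hij : i ≠ j) (D : Matrix (Fin 3) (Fin 3) ℤ) (r t : Fin 3) :
    stepD a i j D r t =
      D r t + 2 * (Mmat a i j r i * D i t + Mmat a i j r j * D j t) + Mmat a i j r t := by
  rw [stepD, two_mul, add_mul]
  simp only [Matrix.add_apply, Mmat_mul_apply hij]
  ring

lemma stepD_apply_of_ne_of_ne (hij : i ≠ j) (D : Matrix (Fin 3) (Fin 3) ℤ) {k : Fin 3}
    (hki : k ≠ i) (hkj : k ≠ j) (t : Fin 3) :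
    stepD a i j D k t = D k t := by
  simp [stepD_apply hij, Mmat_apply_of_ne_of_ne hki hkj]

lemma stepD_apply_sub (hij : i ≠ j) (D : Matrix (Fin 3) (Fin 3) ℤ) (t : Fin 3) :
    stepD a i j D i t - stepD a i j D j t =
      (1 - 2 * mu a) * (D i t + D j t) - mu a * kd i t + (1 - mu a) * kd j t := by
  have hcol_i := Mmat_apply_sub (a := a) hij i
  have hcol_j := Mmat_apply_sub (a := a) hij j
  have hrow := Mmat_apply_sub (a := a) hij t
  simp [kd, hij, hij.symm] at hcol_i hcol_j
  rw [stepD_apply hij, stepD_apply hij]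
  linear_combination hrow + 2 * D i t * hcol_i + 2 * D j t * hcol_j

end stepD

lemma sum_rows_eq_of_stepD (a : ℕ) (τ : Equiv.Perm (Fin 3)) (D : Matrix (Fin 3) (Fin 3) ℤ)
    (t : Fin 3) :
    D 0 t + D 1 t + D 2 t =
      (-1 : ℤ) ^ mu a * (stepD a (τ 0) (τ 1) D (τ 0) t - stepD a (τ 0) (τ 1) D (τ 1) t)
        + stepD a (τ 0) (τ 1) D (τ 2) t - mu a * kd (τ 0) t + (mu a - 1) * kd (τ 1) t := by
  have hsum : D 0 t + D 1 t + D 2 t = D (τ 0) t + D (τ 1) t + D (τ 2) t := by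
    simpa [Fin.sum_univ_three] using (Equiv.sum_comp τ fun r => D r t).symm
  have hij : τ 0 ≠ τ 1 := τ.injective.ne (by decide)
  have hsub := stepD_apply_sub (a := a) hij D t
  have hk := stepD_apply_of_ne_of_ne (a := a) hij D
    (τ.injective.ne (by decide : (2 : Fin 3) ≠ 0)) (τ.injective.ne (by decide : (2 : Fin 3) ≠ 1)) t
  rcases mu_eq_zero_or_one a with hmu | hmu <;>
    simp only [hmu, Nat.cast_zero, Nat.cast_one] at hsub ⊢
  · linear_combination hsum - hsub - hk
  · linear_combination hsum + hsub - hk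

theorem sum_from_next_step_general
    (m : ℕ) (a : ℕ → ℕ)
    (σ : ℕ → Equiv.Perm (Fin 3))
    (D : ℕ → Matrix (Fin 3) (Fin 3) ℤ)
    (hD : ∀ n, n + 1 ≤ m →
      D (n + 1) = 2 * Mmat (a (n + 1)) (σ (n + 1) 0) (σ (n + 1) 1) * D n + D n
        + Mmat (a (n + 1)) (σ (n + 1) 0) (σ (n + 1) 1))
    (s : ℕ → Fin 3 → ℤ)
    (hs : ∀ n t, s n t = D n 0 t + D n 1 t + D n 2 t)
 :
    ∀ n, n + 1 ≤ m → ∀ t : Fin 3,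
      s n t = (-1 : ℤ) ^ (mu (a (n + 1))) *
          (D (n + 1) (σ (n + 1) 0) t - D (n + 1) (σ (n + 1) 1) t)
        + D (n + 1) (σ (n + 1) 2) t
        - (mu (a (n + 1)) : ℤ) * (kd (σ (n + 1) 0) t : ℤ)
        + ((mu (a (n + 1)) : ℤ) - 1) * (kd (σ (n + 1) 1) t : ℤ) := by
  intro n hn t
  rw [hs, hD n hn]
  exact sum_rows_eq_of_stepD (a (n + 1)) (σ (n + 1)) (D n) t

theorem sum_from_next_step
    (m : ℕ) (hm : 1 ≤ m) (a : ℕ → ℕ)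
    (ha : ∀ n, 1 ≤ n → n ≤ m → 0 < a n)
    (σ : ℕ → Equiv.Perm (Fin 3))
    (hσ1 : σ 1 = 1)
    (hσ : ∀ n, 1 ≤ n → n ≤ m →
      σ (n + 1) = if Even (a n) then σ n * trans13 else σ n * cyc132)
    (D : ℕ → Matrix (Fin 3) (Fin 3) ℤ)
    (hD0 : D 0 = 0)
    (hD : ∀ n, n + 1 ≤ m →
      D (n + 1) = 2 * Mmat (a (n + 1)) (σ (n + 1) 0) (σ (n + 1) 1) * D n + D n
        + Mmat (a (n + 1)) (σ (n + 1) 0) (σ (n + 1) 1))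
    (s : ℕ → Fin 3 → ℤ)
    (hs : ∀ n t, s n t = D n 0 t + D n 1 t + D n 2 t)
 :
    ∀ n, n + 1 ≤ m → ∀ t : Fin 3,
      s n t = (-1 : ℤ) ^ (mu (a (n + 1))) *
          (D (n + 1) (σ (n + 1) 0) t - D (n + 1) (σ (n + 1) 1) t)
        + D (n + 1) (σ (n + 1) 2) t
        - (mu (a (n + 1)) : ℤ) * (kd (σ (n + 1) 0) t : ℤ)
        + ((mu (a (n + 1)) : ℤ) - 1) * (kd (σ (n + 1) 1) t : ℤ) :=
  sum_from_next_step_general m a σ D hD s hs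
end
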